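/- Let |ψ_NA⟩ = (1/√(N!)) ∑_{π ∈ S_N} sgn(π) |e_{π(1)}⟩⊗…⊗|e_{π(N)}⟩ be the normalized totally antisymmetric (Aharonov) state on (ℂ^N)^{⊗N}, built from an orthonormal basis {e_1,…,e_N} of ℂ^N. Then: (a) the reduced density matrix of each single party is the maximally mixed state (1/N) I on ℂ^N; (b) for any orthonormal basis {f_1,…,f_N} of ℂ^N, if the first party is measured in this basis, each outcome f_i occurs with probability 1/N, and the conditional post-measurement state of the remaining N−1 parties is (up to a phase) the normalized totally antisymmetric state of N−1 systems built from any orthonormal basis of the (N−1)-dimensional orthogonal complement of f_i in ℂ^N. -/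

import Mathlib

open Matrix

/-- The normalized totally antisymmetric state built from the vectors `w k ∈ ℂ^N`, one for each
party `k : ι`; it is a vector on `(ℂ^N)^{⊗ι}`, the latter realized with index set `ι → Fin N`. -/
noncomputable def antisymVec {ι : Type*} [Fintype ι] [DecidableEq ι] {N : ℕ}
    (w : ι → (Fin N → ℂ)) : (ι → Fin N) → ℂ := fun h =>
  ((1 / Real.sqrt (Nat.factorial (Fintype.card ι)) : ℝ) : ℂ) *
    ∑ π : Equiv.Perm ι, ((Equiv.Perm.sign π : ℤ) : ℂ) * ∏ k, w (π k) (h k)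

/-- The reduced density matrix of party `j` of the pure state `ψ` on `(ℂ^N)^{⊗N}`
(partial trace over all other parties). -/
noncomputable def reducedParty {N : ℕ} (ψ : (Fin N → Fin N) → ℂ) (j : Fin N) :
    Matrix (Fin N) (Fin N) ℂ := fun a b =>
  ∑ h : {k : Fin N // k ≠ j} → Fin N,
    ψ (fun k => if hk : k = j then a else h ⟨k, hk⟩) *
      star (ψ (fun k => if hk : k = j then b else h ⟨k, hk⟩))

/-- The (unnormalized) conditional state `(⟨w| ⊗ I)|ψ⟩` of the remaining parties, after party `j`
of the pure state `ψ` has been measured with outcome `w`. -/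
noncomputable def condVec {N : ℕ} (ψ : (Fin N → Fin N) → ℂ) (j : Fin N) (w : Fin N → ℂ) :
    ({k : Fin N // k ≠ j} → Fin N) → ℂ := fun h =>
  ∑ a, star (w a) * ψ (fun k => if hk : k = j then a else h ⟨k, hk⟩)

/-! Write `ψ = (1/√N!) ∑_π sgn π ⊗ₖ e (π k)` and split off party `j`. The product vectors
`⊗_{k ≠ j} e (π k)` are orthonormal as `π` varies, because two permutations that agree off `j`
agree everywhere. Hence `ρ a b = (1/N!) ∑_π e (π j) a * conj (e (π j) b) = δ a b / N`, and the
probability of the outcome `f i` is `⟨f i, ρ (f i)⟩ = 1/N`.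

Replacing the orthonormal basis `e` by another one `b` multiplies `ψ` by the phase `det (E B*)`.
Take `b` equal to `f i` at party `j` and to `g` elsewhere: projecting party `j` onto `f i` keeps
exactly the permutations fixing `j`, i.e. the permutations of the other `N - 1` parties, and these
reassemble into the antisymmetric state of `g`. -/

def tensorVec {κ n : Type*} [Fintype κ] (v : κ → n → ℂ) : (κ → n) → ℂ :=
  fun h => ∏ k, v k (h k)

/-- `(⟨a| ⊗ I)|ψ⟩`: the component of `ψ` in which party `j` is in the basis state `a`. -/
def slice {ι n : Type*} [DecidableEq ι] (ψ : (ι → n) → ℂ) (j : ι) (a : n) :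
    ({k // k ≠ j} → n) → ℂ :=
  fun h => ψ fun k => if hk : k = j then a else h ⟨k, hk⟩

section Orthonormal

variable {κ m : Type*} [Fintype m]

theorem dotProduct_tensorVec [Fintype κ] [DecidableEq κ] (u v : κ → m → ℂ) :
    star (tensorVec u) ⬝ᵥ tensorVec v = ∏ k, star (u k) ⬝ᵥ v k := by
  simp only [dotProduct, tensorVec, Pi.star_apply, star_prod, ← Finset.prod_mul_distrib]
  exact (Fintype.prod_sum fun k t => star (u k t) * v k t).symm

theorem dotProduct_sum_smul_of_orthonormal [Fintype κ] [DecidableEq κ] {Φ : κ → m → ℂ}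
    (hΦ : ∀ i l, star (Φ i) ⬝ᵥ Φ l = if i = l then 1 else 0) (α β : κ → ℂ) :
    star (∑ i, α i • Φ i) ⬝ᵥ ∑ i, β i • Φ i = ∑ i, star (α i) * β i := by
  simp only [star_sum, star_smul, sum_dotProduct, dotProduct_sum, smul_dotProduct,
    dotProduct_smul, hΦ]
  simp [mul_comm]

theorem mem_unitaryGroup_of_orthonormal [DecidableEq m] {e : m → m → ℂ}
    (he : ∀ i l, star (e i) ⬝ᵥ e l = if i = l then 1 else 0) :
    Matrix.of e ∈ Matrix.unitaryGroup m ℂ := by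
  rw [Matrix.mem_unitaryGroup_iff]
  ext i l
  simp only [Matrix.mul_apply, Matrix.star_apply, Matrix.of_apply, Matrix.one_apply]
  simp only [@eq_comm _ i l, ← he l i]
  simp only [dotProduct, Pi.star_apply, mul_comm]

theorem sum_star_mul_eq_of_orthonormal [DecidableEq m] {e : m → m → ℂ}
    (he : ∀ i l, star (e i) ⬝ᵥ e l = if i = l then 1 else 0) (a b : m) :
    ∑ i, star (e i a) * e i b = if a = b then 1 else 0 := by
  have h := congrFun (congrFun
    ((Matrix.mem_unitaryGroup_iff').mp (mem_unitaryGroup_of_orthonormal he)) a) b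
  simpa only [Matrix.mul_apply, Matrix.star_apply, Matrix.of_apply, Matrix.one_apply] using h

theorem orthonormal_dite {ι : Type*} [DecidableEq ι] {j : ι} {v : m → ℂ}
    {g : {k // k ≠ j} → m → ℂ} (hv : star v ⬝ᵥ v = 1)
    (hg : ∀ k l, star (g k) ⬝ᵥ g l = if k = l then 1 else 0) (hvg : ∀ k, star v ⬝ᵥ g k = 0) :
    ∀ i l, star (if hi : i = j then v else g ⟨i, hi⟩) ⬝ᵥ (if hl : l = j then v else g ⟨l, hl⟩) =
      if i = l then 1 else 0 := by
  intro i l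
  by_cases hi : i = j <;> by_cases hl : l = j
  · simp [hi, hl, hv]
  · simp [hi, hl, hvg, Ne.symm hl]
  · simp [hi, hl, Matrix.star_dotProduct _ v, hvg]
  · simp [hi, hl, hg, Subtype.ext_iff]

end Orthonormal

namespace Equiv.Perm

variable {ι : Type*}

theorem eq_of_apply_eq_of_ne {π σ : Perm ι} {j : ι} (h : ∀ k, k ≠ j → π k = σ k) : π = σ := by
  ext k
  by_cases hk : k = j
  · subst hk
    by_contra hne
    have hx : σ.symm (π k) ≠ k := fun hx => hne (σ.symm_apply_eq.mp hx)
    exact hx (π.injective ((h _ hx).trans (σ.apply_symm_apply _)))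
  · exact h k hk

variable [Fintype ι] [DecidableEq ι]

theorem card_smul_sum_apply {M : Type*} [AddCommMonoid M] (F : ι → M) (j : ι) :
    Fintype.card ι • ∑ π : Perm ι, F (π j) = (Fintype.card ι).factorial • ∑ i, F i := by
  -- reindexing by a swap shows that the left-hand sum does not depend on `j`
  have hj : ∀ k, ∑ π : Perm ι, F (π k) = ∑ π : Perm ι, F (π j) := fun k =>
    Fintype.sum_equiv (Equiv.mulRight (swap k j)) _ _ fun π => by simp
  calc Fintype.card ι • ∑ π : Perm ι, F (π j) = ∑ k, ∑ π : Perm ι, F (π k) := by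
        simp only [hj, Finset.sum_const, Finset.card_univ]
    _ = ∑ π : Perm ι, ∑ k, F (π k) := Finset.sum_comm
    _ = ∑ _π : Perm ι, ∑ i, F i := Finset.sum_congr rfl fun π _ => Equiv.sum_comp π F
    _ = (Fintype.card ι).factorial • ∑ i, F i := by
        rw [Finset.sum_const, Finset.card_univ, Fintype.card_perm]

theorem sum_ite_apply_eq_self_eq_sum_ofSubtype {M : Type*} [AddCommMonoid M] (j : ι)
    (G : Perm ι → M) :
    ∑ π : Perm ι, (if π j = j then G π else 0) =
      ∑ τ : Perm {k // k ≠ j}, G (ofSubtype τ) := by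
  rw [← Finset.sum_filter, Finset.sum_subtype (p := fun π : Perm ι => ∀ a, ¬a ≠ j → π a = a)
    _ (by simp)]
  exact (Fintype.sum_equiv (Perm.subtypeEquivSubtypePerm _) _ _ fun τ => rfl).symm

end Equiv.Perm

theorem dotProduct_tensorVec_perm {ι n : Type*} [Fintype ι] [DecidableEq ι] [Fintype n]
    {e : ι → n → ℂ} (he : ∀ i l, star (e i) ⬝ᵥ e l = if i = l then 1 else 0) (j : ι)
    (π σ : Equiv.Perm ι) :
    star (tensorVec fun k : {k // k ≠ j} => e (π k)) ⬝ᵥ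
        tensorVec (fun k : {k // k ≠ j} => e (σ k)) = if π = σ then 1 else 0 := by
  rw [dotProduct_tensorVec]
  simp only [he, Finset.prod_boole, Finset.mem_univ, forall_const]
  congr 1
  exact propext ⟨fun h => Equiv.Perm.eq_of_apply_eq_of_ne fun k hk => h ⟨k, hk⟩,
    fun h _ => h ▸ rfl⟩

section PartyStates

variable {N : ℕ}

theorem reducedParty_apply (ψ : (Fin N → Fin N) → ℂ) (j a b : Fin N) :
    reducedParty ψ j a b = star (slice ψ j b) ⬝ᵥ slice ψ j a := by
  simp only [reducedParty, slice, dotProduct, Pi.star_apply, mul_comm]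

theorem condVec_eq_sum_smul_slice (ψ : (Fin N → Fin N) → ℂ) (j : Fin N) (w : Fin N → ℂ) :
    condVec ψ j w = ∑ a, star (w a) • slice ψ j a := by
  funext h
  simp only [condVec, slice, Finset.sum_apply, Pi.smul_apply, smul_eq_mul]

theorem condVec_smul (u : ℂ) (ψ : (Fin N → Fin N) → ℂ) (j : Fin N) (w : Fin N → ℂ) :
    condVec (u • ψ) j w = u • condVec ψ j w := by
  simp only [condVec_eq_sum_smul_slice, Finset.smul_sum, smul_comm u]
  rfl

theorem sum_norm_sq_condVec (ψ : (Fin N → Fin N) → ℂ) (j : Fin N) (w : Fin N → ℂ) :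
    ((∑ h, ‖condVec ψ j w h‖ ^ 2 : ℝ) : ℂ) = star w ⬝ᵥ (reducedParty ψ j *ᵥ w) := by
  have hnorm : ((∑ h, ‖condVec ψ j w h‖ ^ 2 : ℝ) : ℂ) =
      star (condVec ψ j w) ⬝ᵥ condVec ψ j w := by
    push_cast
    exact Finset.sum_congr rfl fun h _ => (Complex.conj_mul' _).symm
  rw [hnorm, condVec_eq_sum_smul_slice]
  simp only [star_sum, star_smul, star_star, sum_dotProduct, dotProduct_sum, smul_dotProduct,
    dotProduct_smul, ← reducedParty_apply, smul_eq_mul]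
  simp only [mulVec, dotProduct, Finset.mul_sum, Pi.star_apply]
  exact Finset.sum_congr rfl fun a _ => Finset.sum_congr rfl fun b _ => by ring

end PartyStates

section Antisymmetric

variable {ι : Type*} [Fintype ι] [DecidableEq ι] {N : ℕ}

theorem antisymVec_eq_smul_sum (w : ι → Fin N → ℂ) :
    antisymVec w = ((1 / Real.sqrt (Fintype.card ι).factorial : ℝ) : ℂ) •
      ∑ π : Equiv.Perm ι, ((Equiv.Perm.sign π : ℤ) : ℂ) • tensorVec fun k => w (π k) := by
  funext h
  simp only [antisymVec, tensorVec, Pi.smul_apply, Finset.sum_apply, smul_eq_mul]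

theorem slice_antisymVec (w : ι → Fin N → ℂ) (j : ι) (a : Fin N) :
    slice (antisymVec w) j a =
      ((1 / Real.sqrt (Fintype.card ι).factorial : ℝ) : ℂ) •
        ∑ π : Equiv.Perm ι, ((Equiv.Perm.sign π : ℤ) * w (π j) a : ℂ) •
          tensorVec fun k : {k // k ≠ j} => w (π k) := by
  funext h
  have hprod : ∀ π : Equiv.Perm ι,
      ∏ k, w (π k) (if hk : k = j then a else h ⟨k, hk⟩) =
        w (π j) a * ∏ k : {k // k ≠ j}, w (π k) (h k) := fun π => by
    rw [Fintype.prod_eq_mul_prod_subtype_ne _ j, dif_pos rfl]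
    exact congrArg _ (Finset.prod_congr rfl fun k _ => by rw [dif_neg k.2])
  simp only [slice, antisymVec, tensorVec, hprod, Pi.smul_apply, Finset.sum_apply, smul_eq_mul,
    mul_assoc]

theorem antisymVec_apply_eq_det (w : ι → Fin N → ℂ) (h : ι → Fin N) :
    antisymVec w h = ((1 / Real.sqrt (Fintype.card ι).factorial : ℝ) : ℂ) *
      (Matrix.of fun m k => w m (h k)).det := by
  simp [antisymVec, Matrix.det_apply, Units.smul_def, zsmul_eq_mul]

theorem antisymVec_eq_det_smul {w' w : ι → Fin N → ℂ} {U : Matrix ι ι ℂ}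
    (hw : Matrix.of w' = U * Matrix.of w) : antisymVec w' = U.det • antisymVec w := by
  funext h
  have hmul : (Matrix.of fun m k => w' m (h k)) = U * Matrix.of fun m k => w m (h k) := by
    ext m k
    simpa [Matrix.mul_apply] using congrFun (congrFun hw m) (h k)
  rw [Pi.smul_apply, smul_eq_mul, antisymVec_apply_eq_det, antisymVec_apply_eq_det, hmul,
    Matrix.det_mul, mul_left_comm]

end Antisymmetric

section Aharonov

variable {N : ℕ}

theorem exists_norm_eq_one_antisymVec_eq_smul {e b : Fin N → Fin N → ℂ}
    (he : ∀ i l, star (e i) ⬝ᵥ e l = if i = l then 1 else 0)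
    (hb : ∀ i l, star (b i) ⬝ᵥ b l = if i = l then 1 else 0) :
    ∃ u : ℂ, ‖u‖ = 1 ∧ antisymVec e = u • antisymVec b := by
  have hE := mem_unitaryGroup_of_orthonormal he
  have hB := mem_unitaryGroup_of_orthonormal hb
  refine ⟨(Matrix.of e * star (Matrix.of b)).det, CStarRing.norm_of_mem_unitary
    (Matrix.det_of_mem_unitary (mul_mem hE (Unitary.star_mem hB))), antisymVec_eq_det_smul ?_⟩
  rw [Matrix.mul_assoc, (Matrix.mem_unitaryGroup_iff').mp hB, Matrix.mul_one]

theorem reducedParty_antisymVec {e : Fin N → Fin N → ℂ}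
    (he : ∀ i l, star (e i) ⬝ᵥ e l = if i = l then 1 else 0) (j : Fin N) :
    reducedParty (antisymVec e) j = ((1 / N : ℝ) : ℂ) • 1 := by
  ext a b
  have hsign : ∀ π : Equiv.Perm (Fin N), star ((Equiv.Perm.sign π : ℤ) : ℂ) * star (e (π j) b) *
      ((Equiv.Perm.sign π : ℤ) * e (π j) a) = star (e (π j) b) * e (π j) a := fun π => by
    rw [star_intCast, mul_mul_mul_comm, ← Int.cast_mul, ← Units.val_mul, Int.units_mul_self]
    simp
  have hc : ((1 / Real.sqrt N.factorial : ℝ) : ℂ) * ((1 / Real.sqrt N.factorial : ℝ) : ℂ) =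
      1 / N.factorial := by
    rw [← Complex.ofReal_mul, one_div_mul_one_div, Real.mul_self_sqrt (Nat.cast_nonneg _)]
    push_cast
    rfl
  have hexpand : reducedParty (antisymVec e) j a b =
      1 / N.factorial * ∑ π : Equiv.Perm (Fin N), star (e (π j) b) * e (π j) a := by
    rw [reducedParty_apply, slice_antisymVec, slice_antisymVec, star_smul, smul_dotProduct,
      dotProduct_smul, dotProduct_sum_smul_of_orthonormal (dotProduct_tensorVec_perm he j)]
    simp only [star_mul', hsign]
    rw [Fintype.card_fin, Complex.star_def, Complex.conj_ofReal, smul_smul, hc, smul_eq_mul]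
  have hsum := Equiv.Perm.card_smul_sum_apply (fun m => star (e m b) * e m a) j
  rw [Fintype.card_fin, sum_star_mul_eq_of_orthonormal he, nsmul_eq_mul, nsmul_eq_mul] at hsum
  simp only [@eq_comm _ b a] at hsum
  have hN : (N : ℂ) ≠ 0 := Nat.cast_ne_zero.mpr j.pos.ne'
  have hF : (N.factorial : ℂ) ≠ 0 := Nat.cast_ne_zero.mpr N.factorial_ne_zero
  rw [hexpand, Matrix.smul_apply, Matrix.one_apply, smul_eq_mul]
  generalize (∑ π : Equiv.Perm (Fin N), star (e (π j) b) * e (π j) a) = X at hsum ⊢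
  rw [Complex.ofReal_div, Complex.ofReal_one, Complex.ofReal_natCast]
  field_simp
  linear_combination hsum

theorem condVec_antisymVec (w : Fin N → Fin N → ℂ) (j : Fin N) (v : Fin N → ℂ) :
    condVec (antisymVec w) j v =
      ((1 / Real.sqrt N.factorial : ℝ) : ℂ) •
        ∑ π : Equiv.Perm (Fin N), ((Equiv.Perm.sign π : ℤ) * (star v ⬝ᵥ w (π j)) : ℂ) •
          tensorVec fun k : {k // k ≠ j} => w (π k) := by
  rw [condVec_eq_sum_smul_slice]
  simp only [slice_antisymVec, Fintype.card_fin, smul_comm (star (v _)), ← Finset.smul_sum]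
  congr 1
  simp only [Finset.smul_sum, smul_smul]
  rw [Finset.sum_comm]
  refine Finset.sum_congr rfl fun π _ => ?_
  rw [← Finset.sum_smul, dotProduct, Finset.mul_sum]
  congr 1
  exact Finset.sum_congr rfl fun a _ => by simp only [Pi.star_apply]; ring

theorem sqrt_smul_condVec_antisymVec {w : Fin N → Fin N → ℂ}
    (hw : ∀ m l, star (w m) ⬝ᵥ w l = if m = l then 1 else 0) (j : Fin N) :
    ((Real.sqrt N : ℝ) : ℂ) • condVec (antisymVec w) j (w j) =
      antisymVec fun k : {k // k ≠ j} => w k := by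
  have hfix : ∀ π : Equiv.Perm (Fin N),
      ((Equiv.Perm.sign π : ℤ) * (star (w j) ⬝ᵥ w (π j)) : ℂ) •
          (tensorVec fun k : {k // k ≠ j} => w (π k)) =
        if π j = j then ((Equiv.Perm.sign π : ℤ) : ℂ) • tensorVec fun k : {k // k ≠ j} => w (π k)
        else 0 := fun π => by
    simp only [hw, @eq_comm _ j]
    split_ifs <;> simp
  have hcard : Fintype.card {k // k ≠ j} = N - 1 := by simp
  have hconst : ((Real.sqrt N : ℝ) : ℂ) * ((1 / Real.sqrt N.factorial : ℝ) : ℂ) =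
      ((1 / Real.sqrt (N - 1).factorial : ℝ) : ℂ) := by
    have hN : Real.sqrt N ≠ 0 := by simp [j.pos.ne']
    rw [← Complex.ofReal_mul, ← Nat.mul_factorial_pred j.pos.ne', Nat.cast_mul,
      Real.sqrt_mul (Nat.cast_nonneg _)]
    field_simp
  rw [condVec_antisymVec, antisymVec_eq_smul_sum, smul_smul, hconst, hcard]
  simp only [hfix, Equiv.Perm.sum_ite_apply_eq_self_eq_sum_ofSubtype, Equiv.Perm.sign_ofSubtype,
    Equiv.Perm.ofSubtype_apply_coe]

end Aharonov

theorem aharonov_reduced_and_conditional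
    {N : ℕ} (hN : 0 < N)
    (e : Fin N → (Fin N → ℂ))
    (he : ∀ i j, star (e i) ⬝ᵥ e j = if i = j then 1 else 0) :
    (∀ j : Fin N, reducedParty (antisymVec e) j =
        ((1 / N : ℝ) : ℂ) • (1 : Matrix (Fin N) (Fin N) ℂ)) ∧
    (∀ (f : Fin N → (Fin N → ℂ)),
      (∀ i j, star (f i) ⬝ᵥ f j = if i = j then 1 else 0) →
      ∀ i : Fin N,
        (∑ h, ‖condVec (antisymVec e) (⟨0, hN⟩ : Fin N) (f i) h‖ ^ 2 = 1 / N) ∧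
        (∀ g : {k : Fin N // k ≠ (⟨0, hN⟩ : Fin N)} → (Fin N → ℂ),
          (∀ k l, star (g k) ⬝ᵥ g l = if k = l then 1 else 0) →
          (∀ k, star (f i) ⬝ᵥ g k = 0) →
          ∃ c : ℂ, ‖c‖ = 1 ∧ ∀ h,
            ((Real.sqrt N : ℝ) : ℂ) * condVec (antisymVec e) (⟨0, hN⟩ : Fin N) (f i) h
              = c * antisymVec g h)) := by
  have hρ := reducedParty_antisymVec he
  refine ⟨hρ, fun f hf i => ?_⟩
  have hv : star (f i) ⬝ᵥ f i = 1 := by simpa using hf i i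
  refine ⟨?_, fun g hg hvg => ?_⟩
  · apply Complex.ofReal_injective
    rw [sum_norm_sq_condVec, hρ, Matrix.smul_mulVec, Matrix.one_mulVec, dotProduct_smul, hv]
    push_cast
    ring
  · have hb := orthonormal_dite hv hg hvg
    obtain ⟨u, hu, hψ⟩ := exists_norm_eq_one_antisymVec_eq_smul he hb
    have hcond := sqrt_smul_condVec_antisymVec hb ⟨0, hN⟩
    have hrestrict : (fun k : {k // k ≠ (⟨0, hN⟩ : Fin N)} =>
        if hm : (k : Fin N) = ⟨0, hN⟩ then f i else g ⟨k, hm⟩) = g := funext fun k => dif_neg k.2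
    rw [dif_pos rfl, hrestrict] at hcond
    refine ⟨u, hu, fun h => ?_⟩
    rw [hψ, condVec_smul, ← hcond]
    simp only [Pi.smul_apply, smul_eq_mul]
    ring
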